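/- arXiv:0708.3582 — 4 statements merged into one kernel-verified Lean document; each statement's English description precedes it below -/
import Mathlib

section
/- Let ≥ be a quasi-ordering on simple types whose strict part > is well-founded, and which is arrow monotonic and arrow preserving. Then the relation ≥* defined as the reflexive-transitive closure of (≥ ∪ ⊳), where ⊳ is the strict subterm relation on types, is a quasi-ordering on types extending both ≥ and ⊳, whose strict part is well-founded, and whose associated equivalence coincides with the equivalence ≡ of ≥. -/
inductive Ty (S : Type) : Type
  | sort : S → Ty S
  | arrow : Ty S → Ty S → Ty S

/-- `SubTy a b` : `a` is a strict subterm of the type `b`. -/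
inductive SubTy {S : Type} : Ty S → Ty S → Prop
  | dom {τ σ} : SubTy τ (Ty.arrow τ σ)
  | cod {τ σ} : SubTy σ (Ty.arrow τ σ)
  | domTrans {ρ τ σ} : SubTy ρ τ → SubTy ρ (Ty.arrow τ σ)
  | codTrans {ρ τ σ} : SubTy ρ σ → SubTy ρ (Ty.arrow τ σ)

/-! Arrow preservation says that equivalent types have the same shape, so `≡` preserves size and
transports subterms; together with monotonicity, a strict `>`-step inside a subterm lifts to a
strict step of the whole type. Hence a chain `a ≥* b` is either `a ≡ b` or descends through steps
"`b < a`, or `b ≡` a proper subterm of `a`". The subterm steps decrease size and can be pushed past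
`>`-steps, so their union with the well-founded `>` is well-founded, and `≥*` can only return to
its starting point through `≡`. -/

def Ty.size {S : Type} : Ty S → ℕ
  | .sort _ => 1
  | .arrow τ σ => τ.size + σ.size + 1

theorem SubTy.size_lt {S : Type} {s t : Ty S} (h : SubTy s t) : s.size < t.size := by
  induction h <;> simp only [Ty.size] at * <;> omega

def ArrowMonotonic {S : Type} (ge : Ty S → Ty S → Prop) : Prop :=
  ∀ α τ σ, ge τ σ → ge (Ty.arrow α τ) (Ty.arrow α σ) ∧ ge (Ty.arrow τ α) (Ty.arrow σ α)

def ArrowPreserving {S : Type} (ge : Ty S → Ty S → Prop) : Prop :=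
  ∀ τ σ α, AntisymmRel ge (Ty.arrow τ σ) α ↔
    ∃ τ' σ', α = Ty.arrow τ' σ' ∧ AntisymmRel ge τ' τ ∧ AntisymmRel ge σ' σ

theorem WellFounded.union_of_comm {α : Type*} {A B : α → α → Prop}
    (hA : WellFounded A) (hB : WellFounded B)
    (comm : ∀ a b c, B b a → A c b → ∃ w, A w a ∧ B c w) :
    WellFounded fun b a => A b a ∨ B b a := by
  have acc_of_forall_acc_A : ∀ a, (∀ b, A b a → Acc (fun b a => A b a ∨ B b a) b) →
      Acc (fun b a => A b a ∨ B b a) a := by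
    intro a
    induction a using hB.induction with
    | _ a ihB =>
      refine fun hAacc => ⟨a, fun b hb => hb.elim (hAacc b) fun hBba => ?_⟩
      refine ihB b hBba fun c hc => ?_
      obtain ⟨w, hAwa, hBcw⟩ := comm a b c hBba hc
      exact (hAacc w hAwa).inv (Or.inr hBcw)
  exact ⟨fun a => hA.induction a fun a ih => acc_of_forall_acc_A a ih⟩

namespace ArrowPreserving

variable {S : Type} {ge : Ty S → Ty S → Prop}

theorem size_eq (hap : ArrowPreserving ge) :
    ∀ {a b : Ty S}, AntisymmRel ge a b → a.size = b.size
  | .sort _, .sort _, _ => rfl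
  | .arrow τ σ, _, h => by
    obtain ⟨τ', σ', rfl, hτ, hσ⟩ := (hap τ σ _).mp h
    simp only [Ty.size, hap.size_eq hτ.symm, hap.size_eq hσ.symm]
  | .sort _, .arrow τ σ, h => by
    obtain ⟨_, _, ⟨⟩, _⟩ := (hap τ σ _).mp h.symm

theorem exists_subTy_of_antisymmRel (hap : ArrowPreserving ge) {s t : Ty S} (hst : SubTy s t) :
    ∀ {t'}, AntisymmRel ge t t' → ∃ s', SubTy s' t' ∧ AntisymmRel ge s s' := by
  induction hst with
  | @dom τ σ =>
    intro t' h
    obtain ⟨τ', σ', rfl, hτ, -⟩ := (hap τ σ t').mp h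
    exact ⟨τ', .dom, hτ.symm⟩
  | @cod τ σ =>
    intro t' h
    obtain ⟨τ', σ', rfl, -, hσ⟩ := (hap τ σ t').mp h
    exact ⟨σ', .cod, hσ.symm⟩
  | @domTrans ρ τ σ _ ih =>
    intro t' h
    obtain ⟨τ', σ', rfl, hτ, -⟩ := (hap τ σ t').mp h
    obtain ⟨s', hs', hρ⟩ := ih hτ.symm
    exact ⟨s', .domTrans hs', hρ⟩
  | @codTrans ρ τ σ _ ih =>
    intro t' h
    obtain ⟨τ', σ', rfl, -, hσ⟩ := (hap τ σ t').mp h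
    obtain ⟨s', hs', hρ⟩ := ih hσ.symm
    exact ⟨s', .codTrans hs', hρ⟩

theorem arrow_strict_left (hap : ArrowPreserving ge) (hmono : ArrowMonotonic ge)
    {τ τ' : Ty S} (σ : Ty S) (h : ge τ τ') (h' : ¬ ge τ' τ) :
    ge (Ty.arrow τ σ) (Ty.arrow τ' σ) ∧ ¬ ge (Ty.arrow τ' σ) (Ty.arrow τ σ) := by
  refine ⟨(hmono σ τ τ' h).2, fun hrev => h' ?_⟩
  obtain ⟨_, _, heq, hτ, -⟩ := (hap τ σ _).mp ⟨(hmono σ τ τ' h).2, hrev⟩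
  cases heq
  exact hτ.1

theorem arrow_strict_right (hap : ArrowPreserving ge) (hmono : ArrowMonotonic ge)
    (τ : Ty S) {σ σ' : Ty S} (h : ge σ σ') (h' : ¬ ge σ' σ) :
    ge (Ty.arrow τ σ) (Ty.arrow τ σ') ∧ ¬ ge (Ty.arrow τ σ') (Ty.arrow τ σ) := by
  refine ⟨(hmono τ σ σ' h).1, fun hrev => h' ?_⟩
  obtain ⟨_, _, heq, -, hσ⟩ := (hap τ σ _).mp ⟨(hmono τ σ σ' h).1, hrev⟩
  cases heq
  exact hσ.1

theorem exists_subTy_of_strict (hap : ArrowPreserving ge) (hmono : ArrowMonotonic ge)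
    {v u : Ty S} (hvu : SubTy v u) :
    ∀ {c}, ge v c → ¬ ge c v → ∃ w, SubTy c w ∧ ge u w ∧ ¬ ge w u := by
  induction hvu with
  | @dom τ σ => exact fun h h' => ⟨_, .dom, hap.arrow_strict_left hmono σ h h'⟩
  | @cod τ σ => exact fun h h' => ⟨_, .cod, hap.arrow_strict_right hmono τ h h'⟩
  | @domTrans ρ τ σ _ ih =>
    intro c h h'
    obtain ⟨w, hcw, hτw, hwτ⟩ := ih h h'
    exact ⟨_, .domTrans hcw, hap.arrow_strict_left hmono σ hτw hwτ⟩
  | @codTrans ρ τ σ _ ih =>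
    intro c h h'
    obtain ⟨w, hcw, hσw, hwσ⟩ := ih h h'
    exact ⟨_, .codTrans hcw, hap.arrow_strict_right hmono τ hσw hwσ⟩

end ArrowPreserving

section StrictStep

variable {S : Type} {ge : Ty S → Ty S → Prop}

/-- A strict step of `≥*` from `a` down to `b`, taken modulo `≡`. -/
def StrictStep (ge : Ty S → Ty S → Prop) (b a : Ty S) : Prop :=
  (ge a b ∧ ¬ ge b a) ∨ ∃ v, SubTy v a ∧ AntisymmRel ge v b

theorem wellFounded_strictStep [IsPreorder (Ty S) ge]
    (hwf : WellFounded fun b a => ge a b ∧ ¬ ge b a) (hmono : ArrowMonotonic ge)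
    (hap : ArrowPreserving ge) : WellFounded (StrictStep ge) := by
  have hsubWf : WellFounded fun b a : Ty S => ∃ v, SubTy v a ∧ AntisymmRel ge v b :=
    Subrelation.wf (fun ⟨_, hv, hvb⟩ => (hap.size_eq hvb).symm.trans_lt hv.size_lt)
      (InvImage.wf Ty.size wellFounded_lt)
  refine hwf.union_of_comm hsubWf ?_
  rintro a b c ⟨v, hva, hvb⟩ ⟨hbc, hcb⟩
  obtain ⟨w, hcw, haw, hwa⟩ := hap.exists_subTy_of_strict hmono hva
    (trans_of ge hvb.1 hbc) fun hcv => hcb (trans_of ge hcv hvb.1)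
  exact ⟨w, ⟨haw, hwa⟩, c, hcw, AntisymmRel.refl ge c⟩

theorem StrictStep.of_antisymmRel_left [IsTrans (Ty S) ge] {a b b' : Ty S}
    (h : StrictStep ge b a) (hb : AntisymmRel ge b b') : StrictStep ge b' a := by
  rcases h with ⟨hab, hba⟩ | ⟨v, hva, hvb⟩
  · exact .inl ⟨trans_of ge hab hb.1, fun hb'a => hba (trans_of ge hb.1 hb'a)⟩
  · exact .inr ⟨v, hva, hvb.trans hb⟩

theorem StrictStep.of_antisymmRel_right [IsTrans (Ty S) ge] (hap : ArrowPreserving ge)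
    {a a' b : Ty S} (h : StrictStep ge b a) (ha : AntisymmRel ge a a') : StrictStep ge b a' := by
  rcases h with ⟨hab, hba⟩ | ⟨v, hva, hvb⟩
  · exact .inl ⟨trans_of ge ha.2 hab, fun hba' => hba (trans_of ge hba' ha.2)⟩
  · obtain ⟨v', hv'a', hvv'⟩ := hap.exists_subTy_of_antisymmRel hva ha
    exact .inr ⟨v', hv'a', hvv'.symm.trans hvb⟩

theorem antisymmRel_or_transGen_strictStep [IsPreorder (Ty S) ge] (hap : ArrowPreserving ge)
    {a b : Ty S} (h : Relation.ReflTransGen (fun x y => ge x y ∨ SubTy y x) a b) :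
    AntisymmRel ge a b ∨ Relation.TransGen (StrictStep ge) b a := by
  induction h with
  | refl => exact .inl (AntisymmRel.refl ge a)
  | @tail b c _ hbc ih =>
    have hstep : AntisymmRel ge b c ∨ StrictStep ge c b := by
      rcases hbc with hbc | hcb
      · by_cases hcb : ge c b
        · exact .inl ⟨hbc, hcb⟩
        · exact .inr (.inl ⟨hbc, hcb⟩)
      · exact .inr (.inr ⟨c, hcb, AntisymmRel.refl ge c⟩)
    rcases ih, hstep with ⟨hab | hba, hbc | hcb⟩
    · exact .inl (hab.trans hbc)
    · exact .inr (.single (hcb.of_antisymmRel_right hap hab.symm))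
    · obtain ⟨d, hbd, hda⟩ := Relation.TransGen.head'_iff.mp hba
      exact .inr (.head' (hbd.of_antisymmRel_left hbc) hda)
    · exact .inr (.head hcb hba)

end StrictStep

theorem stmt1 {S : Type} (ge : Ty S → Ty S → Prop)
    (hrefl : ∀ a, ge a a)
    (htrans : ∀ a b c, ge a b → ge b c → ge a c)
    -- the strict part of ≥ is well-founded
    (hwf : WellFounded (fun b a => ge a b ∧ ¬ ge b a))
    -- arrow monotonicity
    (hmono : ∀ α τ σ, ge τ σ → ge (Ty.arrow α τ) (Ty.arrow α σ) ∧ ge (Ty.arrow τ α) (Ty.arrow σ α))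
    -- arrow preservation
    (hap : ∀ τ σ α, (ge (Ty.arrow τ σ) α ∧ ge α (Ty.arrow τ σ)) ↔
      ∃ τ' σ', α = Ty.arrow τ' σ' ∧ (ge τ' τ ∧ ge τ τ') ∧ (ge σ' σ ∧ ge σ σ'))
    -- ≥* is the reflexive-transitive closure of (≥ ∪ ⊳)
    (geS : Ty S → Ty S → Prop)
    (hgeS : ∀ a b, geS a b ↔ Relation.ReflTransGen (fun x y => ge x y ∨ SubTy y x) a b) :
    -- ≥* is a quasi-ordering
    (∀ a, geS a a) ∧ (∀ a b c, geS a b → geS b c → geS a c) ∧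
    -- extending ≥ and ⊳
    (∀ a b, ge a b → geS a b) ∧ (∀ a b, SubTy b a → geS a b) ∧
    -- whose strict part is well-founded
    WellFounded (fun b a => geS a b ∧ ¬ geS b a) ∧
    -- and whose equivalence coincides with the equivalence of ≥
    (∀ a b, (geS a b ∧ geS b a) ↔ (ge a b ∧ ge b a)) := by
  obtain rfl : geS = Relation.ReflTransGen (fun x y => ge x y ∨ SubTy y x) :=
    funext₂ fun a b => propext (hgeS a b)
  have : IsPreorder (Ty S) ge := { refl := hrefl, trans := htrans }
  have hap : ArrowPreserving ge := hap
  have hdesc := (wellFounded_strictStep hwf hmono hap).transGen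
  have hchain := @antisymmRel_or_transGen_strictStep S ge _ hap
  refine ⟨fun _ => .refl, fun _ _ _ => .trans, fun _ _ h => .single (.inl h),
    fun _ _ h => .single (.inr h), ?_, fun a b => ⟨fun ⟨hab, hba⟩ => ?_, fun h => ?_⟩⟩
  · refine Subrelation.wf (fun ⟨hab, hba⟩ => ?_) hdesc
    exact (hchain hab).resolve_left fun h => hba (.single (.inl h.2))
  · rcases hchain hab with hab | hdown
    · exact hab
    rcases hchain hba with hba | hup
    · exact hba.symm
    exact (hdesc.irrefl.irrefl _ (hdown.trans hup)).elim
  · exact ⟨.single (.inl h.1), .single (.inl h.2)⟩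
end

section
/- Let ≻ be a relation on typed terms and define, for data types σ, that a neutral term s of type σ is computable iff every term t with s ≻ t is computable; and for arrow types, the logical-relation clause. If every computable term is strongly normalizing for ≻ (at smaller types, by induction on a well-founded type order), then every computable term of arrow type σ = θ→τ is strongly normalizing for the restriction of ≻ to comparisons whose types stay equivalent to σ, provided ≻ is monotonic under application and variables are computable. -/
/-! A reduction `s ≻ t` at arrow type yields `@(s, x) ≻ @(t, x)` for a computable variable `x`,
so any descending chain from `s` maps to one from the strongly normalizing term `@(s, x)`. -/

theorem Acc.of_map {α β : Type*} {r : α → α → Prop} {r' : β → β → Prop} (f : α → β)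
    (hf : ∀ a b, r a b → r' (f a) (f b)) {a : α} (h : Acc r' (f a)) : Acc r a :=
  Subrelation.accessible (hf _ _) (InvImage.accessible f h)

theorem stmt9 {S Term : Type}
    (eqv : Ty S → Ty S → Prop)             -- equivalence of the type ordering
    (succ : Term → Term → Prop)            -- the term ordering ≻
    (app : Term → Term → Term)
    (typeOf : Term → Ty S)
    (C : Ty S → Set Term)                  -- candidate interpretations
    -- logical-relation clause at arrow types
    (harrow : ∀ (ρ τ : Ty S) (s : Term),
      s ∈ C (Ty.arrow ρ τ) ↔ ∀ t ∈ C ρ, app s t ∈ C τ)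
    -- ≻ is monotonic under application
    (hmono : ∀ s t u, succ s t → succ (app s u) (app t u))
    -- variables are computable: every type has a computable inhabitant
    (hvar : ∀ σ : Ty S, ∃ x : Term, x ∈ C σ)
    (θ τ : Ty S)
    -- at the smaller type τ, computable terms are strongly normalizing for ≻
    (hSN : ∀ t ∈ C τ, Acc (fun a b => succ b a) t) :
    -- every computable term of arrow type θ→τ is strongly normalizing for the
    -- restriction of ≻ to comparisons whose types stay equivalent to θ→τ
    ∀ s ∈ C (Ty.arrow θ τ),
      Acc (fun a b => succ b a ∧ eqv (typeOf b) (Ty.arrow θ τ) ∧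
        eqv (typeOf a) (Ty.arrow θ τ)) s := by
  intro s hs
  obtain ⟨x, hx⟩ := hvar θ
  have happ : app s x ∈ C τ := (harrow θ τ s).mp hs x hx
  exact Acc.of_map (app · x) (fun a b ⟨hba, _⟩ => hmono b a x hba) (hSN _ happ)
end

section
/- If ≻₁ and ≻₂ are well-founded relations on a set A such that ≻₁ is compatible with ≻₂, meaning that s ≻₁ t implies o(s) ≥ o(t) for a rank function o monotone for ≻₂, then the union ≻₁ ∪ ≻₂ is well-founded on A. -/
theorem stmt11 {A : Type} (r₁ r₂ : A → A → Prop)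
    (o : A → Ordinal.{0})                 -- a rank function for ≻₂
    (hwf₁ : WellFounded (fun t s => r₁ s t))
    (hwf₂ : WellFounded (fun t s => r₂ s t))
    -- ≻₂ strictly decreases the rank
    (h₂ : ∀ s t, r₂ s t → o t < o s)
    -- compatibility: a ≻₁-step does not increase the rank
    (h₁ : ∀ s t, r₁ s t → o t ≤ o s)
    -- ≻₁ is well-founded on each rank level
    (hlevel : ∀ a : Ordinal.{0},
      WellFounded (fun t s : A => r₁ s t ∧ o s = a ∧ o t = a)) :
    WellFounded (fun t s : A => r₁ s t ∨ r₂ s t) := by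
  have key : ∀ a : Ordinal.{0}, ∀ x : A, o x = a →
      Acc (fun t s : A => r₁ s t ∨ r₂ s t) x := by
    intro a
    induction a using Ordinal.induction with
    | h a IH =>
      intro x hx
      induction (hlevel a).apply x with
      | intro x _ IH2 =>
        constructor
        intro t ht
        rcases ht with ht | ht
        · rcases lt_or_eq_of_le (hx ▸ h₁ x t ht) with h | h
          · exact IH _ h t rfl
          · exact IH2 t ⟨ht, hx, h⟩ h
        · exact IH _ (hx ▸ h₂ x t ht) t rfl
  exact ⟨fun x => key (o x) x rfl⟩
end

section
/- If every term of minimal type that is strongly normalizing is computable, all components s₁,…,sₙ are computable, and f(s⃗) ⊳_acc v, then v is computable. -/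
/-- Algebraic terms: variables and function symbols applied to lists of terms. -/
inductive Trm (V F : Type) : Type
  | var : V → Trm V F
  | fn : F → List (Trm V F) → Trm V F

/-- `Accin AccP u s` : `u` is accessible in `s`. -/
inductive Accin {V F : Type} (AccP : F → Set ℕ) : Trm V F → Trm V F → Prop
  | base {f l i u} : i ∈ AccP f → l[i]? = some u → Accin AccP u (.fn f l)
  | step {f l i s u} : i ∈ AccP f → l[i]? = some s → Accin AccP u s →
      Accin AccP u (.fn f l)

/-- `StrictSub u s` : `u` is a strict subterm of `s`. -/
inductive StrictSub {V F : Type} : Trm V F → Trm V F → Prop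
  | mem {f l t} : t ∈ l → StrictSub t (.fn f l)
  | trans {f l t u} : StrictSub u t → t ∈ l → StrictSub u (.fn f l)

/-- `FreeIn x t` : the variable `x` occurs (free) in `t`. -/
inductive FreeIn {V F : Type} : V → Trm V F → Prop
  | var {x} : FreeIn x (.var x)
  | fn {x f l t} : t ∈ l → FreeIn x t → FreeIn x (.fn f l)

/-! Every term accessible in `f(s⃗)` is some `sᵢ` or accessible in one, and computability descends
along accessible argument positions. A strict subterm of `f(s⃗)` is some `sᵢ` or a strict subterm
of one, so it is strongly normalizing because the computable `sᵢ` are; at minimal type this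
already makes it computable. -/

section

variable {V F : Type}

theorem Accin.exists_mem_of_fn {AccP : F → Set ℕ} {f : F} {l : List (Trm V F)} {u : Trm V F}
    (h : Accin AccP u (.fn f l)) : ∃ s ∈ l, s = u ∨ Accin AccP u s := by
  cases h with
  | base _ hu => exact ⟨u, List.mem_of_getElem? hu, .inl rfl⟩
  | step _ hs hacc => exact ⟨_, List.mem_of_getElem? hs, .inr hacc⟩

theorem StrictSub.exists_mem_of_fn {f : F} {l : List (Trm V F)} {u : Trm V F}
    (h : StrictSub u (.fn f l)) : ∃ t ∈ l, t = u ∨ StrictSub u t := by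
  cases h with
  | mem ht => exact ⟨u, ht, .inl rfl⟩
  | trans hsub ht => exact ⟨_, ht, .inr hsub⟩

def AccClosed (AccP : F → Set ℕ) (P : Trm V F → Prop) : Prop :=
  ∀ f l, P (.fn f l) → ∀ i ∈ AccP f, ∀ u, l[i]? = some u → P u

theorem AccClosed.of_accin {AccP : F → Set ℕ} {P : Trm V F → Prop} (hP : AccClosed AccP P)
    {u t : Trm V F} (h : Accin AccP u t) (ht : P t) : P u := by
  induction h with
  | base hi hu => exact hP _ _ ht _ hi _ hu
  | step hi hs _ ih => exact ih (hP _ _ ht _ hi _ hs)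

theorem AccClosed.of_accin_fn {AccP : F → Set ℕ} {P : Trm V F → Prop} (hP : AccClosed AccP P)
    {f : F} {l : List (Trm V F)} (hl : ∀ s ∈ l, P s) {u : Trm V F}
    (h : Accin AccP u (.fn f l)) : P u := by
  obtain ⟨s, hs, rfl | hacc⟩ := h.exists_mem_of_fn
  · exact hl s hs
  · exact hP.of_accin hacc (hl s hs)

theorem StrictSub.of_fn_of_forall_mem {Q : Trm V F → Prop}
    (hQ : ∀ u t, StrictSub u t → Q t → Q u) {f : F} {l : List (Trm V F)}
    (hl : ∀ s ∈ l, Q s) {u : Trm V F} (h : StrictSub u (.fn f l)) : Q u := by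
  obtain ⟨t, ht, rfl | hsub⟩ := h.exists_mem_of_fn
  · exact hl t ht
  · exact hQ _ _ hsub (hl t ht)

end

theorem stmt15 {V F : Type} (AccP : F → Set ℕ)
    (minTy : Trm V F → Prop)                -- "has minimal type"
    (SN Computable : Trm V F → Prop)
    -- strongly normalizing terms of minimal type are computable
    (hmin : ∀ v, minTy v → SN v → Computable v)
    -- computable terms are strongly normalizing
    (hCompSN : ∀ t, Computable t → SN t)
    -- strict subterms of strongly normalizing terms are strongly normalizing
    (hSNsub : ∀ u t, StrictSub u t → SN t → SN u)
    -- computability is closed under the accessibility clauses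
    (hstep : ∀ f l, Computable (Trm.fn f l) →
      ∀ i ∈ AccP f, ∀ u, l[i]? = some u → Computable u) :
    ∀ (f : F) (l : List (Trm V F)) (v : Trm V F),
      (∀ s ∈ l, Computable s) →
      -- f(s⃗) ⊳_acc v
      (Accin AccP v (Trm.fn f l) ∨
        (StrictSub v (Trm.fn f l) ∧ minTy v ∧
          ∀ x, FreeIn x v → FreeIn x (Trm.fn f l))) →
      Computable v := by
  intro f l v hl h
  rcases h with hacc | ⟨hsub, hty, -⟩
  · exact AccClosed.of_accin_fn hstep hl hacc
  · exact hmin v hty (hsub.of_fn_of_forall_mem hSNsub fun s hs => hCompSN s (hl s hs))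
end
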